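/- Let $X_1,\ldots,X_n$ and $Y_1,\ldots,Y_n$ be iid with continuous distribution (mutually independent), and let $\tau$ denote Kendall's tau of the two samples. Then $\mathbb{E}[\tau]=0$ and $\mathrm{Var}(\tau) = \frac{2(2n+5)}{9 n(n-1)}$. -/

import Mathlib

open Finset MeasureTheory ProbabilityTheory
open scoped ENNReal

lemma measurable_realSign : Measurable Real.sign := by
  have h : Real.sign = fun r : ℝ => if r < 0 then (-1:ℝ) else if 0 < r then 1 else 0 := by
    funext r; rfl
  rw [h]
  exact Measurable.ite measurableSet_Iio measurable_const
    (Measurable.ite measurableSet_Ioi measurable_const measurable_const)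

lemma abs_realSign_le (x : ℝ) : |Real.sign x| ≤ 1 := by
  rcases Real.sign_apply_eq x with h | h | h <;> rw [h] <;> norm_num

lemma prod_diag_null (μ ν : Measure ℝ) [SFinite ν] (hν : ∀ x, ν {x} = 0) :
    (μ.prod ν) {p : ℝ × ℝ | p.1 = p.2} = 0 := by
  have hms : MeasurableSet {p : ℝ × ℝ | p.1 = p.2} :=
    measurableSet_eq_fun measurable_fst measurable_snd
  rw [Measure.prod_apply hms]
  simp [hν]

lemma integrable_of_bdd {Ω : Type*} [MeasurableSpace Ω] {P : Measure Ω} [IsProbabilityMeasure P]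
    {f : Ω → ℝ} (hf : AEStronglyMeasurable f P) {C : ℝ} (h : ∀ ω, |f ω| ≤ C) :
    Integrable f P :=
  memLp_one_iff_integrable.mp (MemLp.of_bound hf C
    (Filter.Eventually.of_forall (by simpa [Real.norm_eq_abs] using h)))

lemma pair_sign_integral (μ : Measure ℝ) [IsProbabilityMeasure μ] :
    ∫ p : ℝ × ℝ, Real.sign (p.1 - p.2) ∂(μ.prod μ) = 0 := by
  have hmeas : Measurable fun p : ℝ × ℝ => Real.sign (p.1 - p.2) :=
    measurable_realSign.comp (measurable_fst.sub measurable_snd)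
  have h1 : ∫ p : ℝ × ℝ, Real.sign (p.1 - p.2) ∂(μ.prod μ)
      = ∫ p : ℝ × ℝ, Real.sign (p.2 - p.1) ∂(μ.prod μ) := by
    conv_lhs => rw [← Measure.prod_swap]
    rw [integral_map measurable_swap.aemeasurable hmeas.aestronglyMeasurable]; rfl
  have h2 : ∀ p : ℝ × ℝ, Real.sign (p.2 - p.1) = - Real.sign (p.1 - p.2) := by
    intro p; rw [← neg_sub, Real.sign_neg]
  simp_rw [h2] at h1
  rw [integral_neg] at h1
  linarith

lemma tie1_null (μ : Measure ℝ) [IsProbabilityMeasure μ] (hμ : ∀ x, μ {x} = 0) :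
    (μ.prod (μ.prod μ)) {p : ℝ × ℝ × ℝ | p.1 = p.2.1} = 0 := by
  have hms : MeasurableSet {p : ℝ × ℝ × ℝ | p.1 = p.2.1} :=
    measurableSet_eq_fun measurable_fst (measurable_fst.comp measurable_snd)
  rw [Measure.prod_apply hms]
  have h : ∀ x : ℝ, (μ.prod μ) {q : ℝ × ℝ | x = q.1} = 0 := by
    intro x
    have hset : {q : ℝ × ℝ | x = q.1} = {x} ×ˢ (Set.univ : Set ℝ) := by
      ext ⟨a,b⟩; aesop
    rw [hset, Measure.prod_prod]
    simp [hμ x]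
  simp [h]

lemma tie2_null (μ : Measure ℝ) [IsProbabilityMeasure μ] (hμ : ∀ x, μ {x} = 0) :
    (μ.prod (μ.prod μ)) {p : ℝ × ℝ × ℝ | p.1 = p.2.2} = 0 := by
  have hms : MeasurableSet {p : ℝ × ℝ × ℝ | p.1 = p.2.2} :=
    measurableSet_eq_fun measurable_fst (measurable_snd.comp measurable_snd)
  rw [Measure.prod_apply hms]
  have h : ∀ x : ℝ, (μ.prod μ) {q : ℝ × ℝ | x = q.2} = 0 := by
    intro x
    have hset : {q : ℝ × ℝ | x = q.2} = (Set.univ : Set ℝ) ×ˢ {x} := by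
      ext ⟨a,b⟩; aesop
    rw [hset, Measure.prod_prod]
    simp [hμ x]
  simp [h]

lemma tie3_null (μ : Measure ℝ) [IsProbabilityMeasure μ] (hμ : ∀ x, μ {x} = 0) :
    (μ.prod (μ.prod μ)) {p : ℝ × ℝ × ℝ | p.2.1 = p.2.2} = 0 := by
  have hms : MeasurableSet {p : ℝ × ℝ × ℝ | p.2.1 = p.2.2} :=
    measurableSet_eq_fun (measurable_fst.comp measurable_snd) (measurable_snd.comp measurable_snd)
  rw [Measure.prod_apply hms]
  simp [prod_diag_null μ μ hμ]

lemma triple_rel_measure (μ : Measure ℝ) [IsProbabilityMeasure μ]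
    (r : ℝ → ℝ → Prop) (hrm : MeasurableSet {p : ℝ × ℝ | r p.1 p.2})
    (hasym : ∀ a b, r a b → ¬ r b a)
    (hcov : ∀ x y z : ℝ, x ≠ y → x ≠ z → y ≠ z →
      (r y x ∧ r z x) ∨ (r x y ∧ r z y) ∨ (r x z ∧ r y z))
    (ht1 : (μ.prod (μ.prod μ)) {p : ℝ × ℝ × ℝ | p.1 = p.2.1} = 0)
    (ht2 : (μ.prod (μ.prod μ)) {p : ℝ × ℝ × ℝ | p.1 = p.2.2} = 0)
    (ht3 : (μ.prod (μ.prod μ)) {p : ℝ × ℝ × ℝ | p.2.1 = p.2.2} = 0) :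
    (μ.prod (μ.prod μ)) {p : ℝ × ℝ × ℝ | r p.2.1 p.1 ∧ r p.2.2 p.1} = 1/3 := by
  set ρ := μ.prod (μ.prod μ) with hρ
  have mx : Measurable fun p : ℝ × ℝ × ℝ => p.1 := measurable_fst
  have my : Measurable fun p : ℝ × ℝ × ℝ => p.2.1 := measurable_fst.comp measurable_snd
  have mz : Measurable fun p : ℝ × ℝ × ℝ => p.2.2 := measurable_snd.comp measurable_snd
  set M1 : Set (ℝ × ℝ × ℝ) := {p | r p.2.1 p.1 ∧ r p.2.2 p.1} with hM1def
  set M2 : Set (ℝ × ℝ × ℝ) := {p | r p.1 p.2.1 ∧ r p.2.2 p.2.1} with hM2def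
  set M3 : Set (ℝ × ℝ × ℝ) := {p | r p.2.1 p.2.2 ∧ r p.1 p.2.2} with hM3def
  have hM1 : MeasurableSet M1 := ((my.prodMk mx) hrm).inter ((mz.prodMk mx) hrm)
  have hM2 : MeasurableSet M2 := ((mx.prodMk my) hrm).inter ((mz.prodMk my) hrm)
  have hM3 : MeasurableSet M3 := ((my.prodMk mz) hrm).inter ((mx.prodMk mz) hrm)
  -- the permutations
  have h1 : MeasurePreserving (MeasurableEquiv.prodAssoc.symm :
      ℝ × ℝ × ℝ ≃ᵐ (ℝ × ℝ) × ℝ) ρ ((μ.prod μ).prod μ) :=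
    (measurePreserving_prodAssoc μ μ μ).symm MeasurableEquiv.prodAssoc
  have h2 : MeasurePreserving (Prod.map (Prod.swap : ℝ × ℝ → ℝ × ℝ) (id : ℝ → ℝ))
      ((μ.prod μ).prod μ) ((μ.prod μ).prod μ) :=
    Measure.measurePreserving_swap.prod (MeasurePreserving.id μ)
  have h3 := measurePreserving_prodAssoc μ μ μ
  have hσ12 : MeasurePreserving (fun p : ℝ × ℝ × ℝ => (p.2.1, (p.1, p.2.2))) ρ ρ := by
    exact (h3.comp h2).comp h1
  have h4 : MeasurePreserving (Prod.swap : (ℝ × ℝ) × ℝ → ℝ × (ℝ × ℝ))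
      ((μ.prod μ).prod μ) (μ.prod (μ.prod μ)) := Measure.measurePreserving_swap
  have h5 : MeasurePreserving (Prod.map (id : ℝ → ℝ) (Prod.swap : ℝ × ℝ → ℝ × ℝ))
      (μ.prod (μ.prod μ)) (μ.prod (μ.prod μ)) :=
    (MeasurePreserving.id μ).prod Measure.measurePreserving_swap
  have hσ13 : MeasurePreserving (fun p : ℝ × ℝ × ℝ => (p.2.2, (p.2.1, p.1))) ρ ρ := by
    exact (h5.comp h4).comp h1
  have e12 : (fun p : ℝ × ℝ × ℝ => (p.2.1, (p.1, p.2.2))) ⁻¹' M1 = M2 := rfl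
  have e13 : (fun p : ℝ × ℝ × ℝ => (p.2.2, (p.2.1, p.1))) ⁻¹' M1 = M3 := rfl
  have hm12 : ρ M2 = ρ M1 := by
    rw [← e12]; exact hσ12.measure_preimage hM1.nullMeasurableSet
  have hm13 : ρ M3 = ρ M1 := by
    rw [← e13]; exact hσ13.measure_preimage hM1.nullMeasurableSet
  -- disjointness
  have d12 : Disjoint M1 M2 := by
    rw [Set.disjoint_left]; rintro p ⟨h1', h2'⟩ ⟨h3', h4'⟩; exact hasym _ _ h1' h3'
  have d13 : Disjoint M1 M3 := by
    rw [Set.disjoint_left]; rintro p ⟨h1', h2'⟩ ⟨h3', h4'⟩; exact hasym _ _ h2' h4'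
  have d23 : Disjoint M2 M3 := by
    rw [Set.disjoint_left]; rintro p ⟨h1', h2'⟩ ⟨h3', h4'⟩; exact hasym _ _ h2' h3'
  -- coverage
  have hcover : (Set.univ : Set (ℝ × ℝ × ℝ)) ⊆ (M1 ∪ M2 ∪ M3) ∪
      ({p : ℝ × ℝ × ℝ | p.1 = p.2.1} ∪ {p : ℝ × ℝ × ℝ | p.1 = p.2.2} ∪
        {p : ℝ × ℝ × ℝ | p.2.1 = p.2.2}) := by
    rintro p -
    by_cases e1 : p.1 = p.2.1
    · exact Or.inr (Or.inl (Or.inl e1))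
    by_cases e2 : p.1 = p.2.2
    · exact Or.inr (Or.inl (Or.inr e2))
    by_cases e3 : p.2.1 = p.2.2
    · exact Or.inr (Or.inr e3)
    rcases hcov p.1 p.2.1 p.2.2 e1 e2 e3 with h | h | h
    · exact Or.inl (Or.inl (Or.inl h))
    · exact Or.inl (Or.inl (Or.inr ⟨h.1, h.2⟩))
    · exact Or.inl (Or.inr ⟨h.2, h.1⟩)
  have hsum : ρ (M1 ∪ M2 ∪ M3) = ρ M1 + ρ M2 + ρ M3 := by
    rw [measure_union (d13.union_left d23) hM3, measure_union d12 hM2]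
  have hone : ρ (M1 ∪ M2 ∪ M3) = 1 := by
    have hle : (1 : ℝ≥0∞) ≤ ρ (M1 ∪ M2 ∪ M3) := by
      have := measure_mono (μ := ρ) hcover
      rw [measure_univ] at this
      refine le_trans this ?_
      refine le_trans (measure_union_le _ _) ?_
      have hz : ρ ({p : ℝ × ℝ × ℝ | p.1 = p.2.1} ∪ {p : ℝ × ℝ × ℝ | p.1 = p.2.2} ∪
          {p : ℝ × ℝ × ℝ | p.2.1 = p.2.2}) = 0 := by
        refine measure_union_null (measure_union_null ht1 ht2) ht3
      rw [hz, add_zero]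
    exact le_antisymm prob_le_one hle
  have key : (3 : ℝ≥0∞) * ρ M1 = 1 := by
    have : ρ M1 + ρ M2 + ρ M3 = 1 := by rw [← hsum, hone]
    rw [hm12, hm13] at this
    rw [← this]; ring
  have h3ne : (3 : ℝ≥0∞) ≠ 0 := by norm_num
  have h3nt : (3 : ℝ≥0∞) ≠ ⊤ := by norm_num
  calc ρ M1 = (3 : ℝ≥0∞)⁻¹ * ((3 : ℝ≥0∞) * ρ M1) := by
        rw [← mul_assoc, ENNReal.inv_mul_cancel h3ne h3nt, one_mul]
    _ = 1/3 := by rw [key, mul_one, one_div]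

lemma triple_sign_integral (μ : Measure ℝ) [IsProbabilityMeasure μ] (hμ : ∀ x, μ {x} = 0) :
    ∫ p : ℝ × ℝ × ℝ, Real.sign (p.1 - p.2.1) * Real.sign (p.1 - p.2.2)
      ∂(μ.prod (μ.prod μ)) = 1/3 := by
  set ρ := μ.prod (μ.prod μ) with hρ
  have ht1 := tie1_null μ hμ
  have ht2 := tie2_null μ hμ
  have ht3 := tie3_null μ hμ
  have hcovlt : ∀ x y z : ℝ, x ≠ y → x ≠ z → y ≠ z →
      (y < x ∧ z < x) ∨ (x < y ∧ z < y) ∨ (x < z ∧ y < z) := by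
    intro x y z hxy hxz hyz
    rcases lt_trichotomy x y with h1 | h1 | h1 <;>
      rcases lt_trichotomy x z with h2 | h2 | h2 <;>
        rcases lt_trichotomy y z with h3 | h3 | h3 <;>
          first
            | exact Or.inl ⟨by linarith, by linarith⟩
            | exact Or.inr (Or.inl ⟨by linarith, by linarith⟩)
            | exact Or.inr (Or.inr ⟨by linarith, by linarith⟩)
            | tauto
  have hcovgt : ∀ x y z : ℝ, x ≠ y → x ≠ z → y ≠ z →
      (y > x ∧ z > x) ∨ (x > y ∧ z > y) ∨ (x > z ∧ y > z) := by
    intro x y z hxy hxz hyz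
    rcases lt_trichotomy x y with h1 | h1 | h1 <;>
      rcases lt_trichotomy x z with h2 | h2 | h2 <;>
        rcases lt_trichotomy y z with h3 | h3 | h3 <;>
          first
            | exact Or.inl ⟨by linarith, by linarith⟩
            | exact Or.inr (Or.inl ⟨by linarith, by linarith⟩)
            | exact Or.inr (Or.inr ⟨by linarith, by linarith⟩)
            | tauto
  have hmax : ρ {p : ℝ × ℝ × ℝ | p.2.1 < p.1 ∧ p.2.2 < p.1} = 1/3 :=
    triple_rel_measure μ (· < ·) (measurableSet_lt measurable_fst measurable_snd)
      (fun a b h h' => lt_asymm h h') hcovlt ht1 ht2 ht3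
  have hmin : ρ {p : ℝ × ℝ × ℝ | p.1 < p.2.1 ∧ p.1 < p.2.2} = 1/3 :=
    triple_rel_measure μ (· > ·) (measurableSet_lt measurable_snd measurable_fst)
      (fun a b h h' => lt_asymm h h') hcovgt ht1 ht2 ht3
  set M : Set (ℝ × ℝ × ℝ) := {p | p.2.1 < p.1 ∧ p.2.2 < p.1} with hMdef
  set N : Set (ℝ × ℝ × ℝ) := {p | p.1 < p.2.1 ∧ p.1 < p.2.2} with hNdef
  have mx : Measurable fun p : ℝ × ℝ × ℝ => p.1 := measurable_fst
  have my : Measurable fun p : ℝ × ℝ × ℝ => p.2.1 := measurable_fst.comp measurable_snd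
  have mz : Measurable fun p : ℝ × ℝ × ℝ => p.2.2 := measurable_snd.comp measurable_snd
  have hM : MeasurableSet M := (measurableSet_lt my mx).inter (measurableSet_lt mz mx)
  have hN : MeasurableSet N := (measurableSet_lt mx my).inter (measurableSet_lt mx mz)
  have hd : Disjoint M N := by
    rw [Set.disjoint_left]; rintro p ⟨h1, h2⟩ ⟨h3, h4⟩; exact lt_asymm h1 h3
  have hA : MeasurableSet (M ∪ N) := hM.union hN
  have hρA : ρ (M ∪ N) = 2/3 := by
    rw [measure_union hd hN, hmax, hmin]
    rw [ENNReal.div_add_div_same]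
    norm_num
  have hae1 : ∀ᵐ p ∂ρ, ¬ (p.1 = p.2.1) := (measure_eq_zero_iff_ae_notMem).1 ht1
  have hae2 : ∀ᵐ p ∂ρ, ¬ (p.1 = p.2.2) := (measure_eq_zero_iff_ae_notMem).1 ht2
  have hae : (fun p : ℝ × ℝ × ℝ => Real.sign (p.1 - p.2.1) * Real.sign (p.1 - p.2.2))
      =ᵐ[ρ] fun p => 2 * (M ∪ N).indicator (1 : (ℝ×ℝ×ℝ) → ℝ) p - 1 := by
    filter_upwards [hae1, hae2] with p hp1 hp2
    by_cases hpA : p ∈ M ∪ N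
    · rw [Set.indicator_of_mem hpA]
      rcases hpA with hp | hp
      · rw [Real.sign_of_pos (by simpa [sub_pos] using hp.1),
          Real.sign_of_pos (by simpa [sub_pos] using hp.2)]; norm_num
      · rw [Real.sign_of_neg (by simp only [sub_neg]; exact hp.1),
          Real.sign_of_neg (by simp only [sub_neg]; exact hp.2)]; norm_num
    · rw [Set.indicator_of_notMem hpA]
      simp only [Set.mem_union, hMdef, hNdef, Set.mem_setOf_eq] at hpA
      push_neg at hpA
      rcases Ne.lt_or_gt hp1 with h1 | h1 <;> rcases Ne.lt_or_gt hp2 with h2 | h2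
      · exact absurd (hpA.2 h1) (not_le.mpr h2)
      · rw [Real.sign_of_neg (by linarith), Real.sign_of_pos (by linarith)]; norm_num
      · rw [Real.sign_of_pos (by linarith), Real.sign_of_neg (by linarith)]; norm_num
      · exact absurd (hpA.1 h1) (not_le.mpr h2)
  rw [integral_congr_ae hae]
  have hI : Integrable ((M ∪ N).indicator (1 : (ℝ×ℝ×ℝ) → ℝ)) ρ :=
    (integrable_const (1:ℝ)).indicator hA
  rw [integral_sub (hI.const_mul 2) (integrable_const 1)]
  rw [integral_const_mul, integral_indicator_one hA, integral_const, measureReal_def, hρA]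
  simp only [measureReal_def, measure_univ, ENNReal.toReal_one, smul_eq_mul, one_mul]
  rw [ENNReal.toReal_div]
  norm_num

lemma comb_sum (n : ℕ) (hn : 2 ≤ n) (w : Fin n × Fin n → Fin n × Fin n → ℝ)
    (hw : ∀ p q : Fin n × Fin n, p.1 < p.2 → q.1 < q.2 → w p q =
      if p = q then 1 else
      if p.1 = q.1 ∨ p.1 = q.2 ∨ p.2 = q.1 ∨ p.2 = q.2 then 1/9 else 0) :
    ∑ p ∈ Finset.univ.filter (fun p : Fin n × Fin n => p.1 < p.2),
      ∑ q ∈ Finset.univ.filter (fun q : Fin n × Fin n => q.1 < q.2), w p q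
      = (n : ℝ) * ((n : ℝ) - 1) * (2 * (n : ℝ) + 5) / 18 := by
  classical
  set S := Finset.univ.filter (fun p : Fin n × Fin n => p.1 < p.2) with hS
  -- card of S
  have hcardS2 : S.card * 2 = n * (n - 1) := by
    have h1 : S.card = ∑ a : Fin n, (n - 1 - (a : ℕ)) := by
      rw [hS, Finset.card_filter, Fintype.sum_prod_type]
      refine Finset.sum_congr rfl fun a _ => ?_
      rw [← Finset.card_filter, Finset.filter_lt_eq_Ioi, Fin.card_Ioi]
    rw [h1, Fin.sum_univ_eq_sum_range, ← Finset.sum_range_reflect (fun k => n - 1 - k)]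
    have h2 : ∀ k ∈ Finset.range n, n - 1 - (n - 1 - k) = k := by intro k hk; have := Finset.mem_range.1 hk; omega
    rw [Finset.sum_congr rfl h2, Finset.sum_range_id_mul_two]
  have hcardS : (S.card : ℝ) = (n : ℝ) * ((n : ℝ) - 1) / 2 := by
    have := congrArg (fun k : ℕ => (k : ℝ)) hcardS2
    push_cast [Nat.cast_sub (by omega : 1 ≤ n)] at this
    linarith
  -- fiber counts
  have hc1 : ∀ a : Fin n, (∑ q ∈ S, (if a = q.1 then (1:ℝ) else 0)) = ((n - 1 - (a : ℕ) : ℕ) : ℝ) := by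
    intro a
    rw [Finset.sum_boole]
    congr 1
    have : S.filter (fun q => a = q.1) = {a} ×ˢ Finset.Ioi a := by
      ext ⟨b, c⟩
      simp only [hS, Finset.mem_filter, Finset.mem_univ, true_and, Finset.mem_product,
        Finset.mem_singleton, Finset.mem_Ioi]
      constructor
      · rintro ⟨h1, h2⟩; exact ⟨h2.symm, h2 ▸ h1⟩
      · rintro ⟨h1, h2⟩; exact ⟨h1 ▸ h2, h1.symm⟩
    rw [this, Finset.card_product, Finset.card_singleton, one_mul, Fin.card_Ioi]
  have hc2 : ∀ a : Fin n, (∑ q ∈ S, (if a = q.2 then (1:ℝ) else 0)) = ((a : ℕ) : ℝ) := by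
    intro a
    rw [Finset.sum_boole]
    congr 1
    have : S.filter (fun q => a = q.2) = Finset.Iio a ×ˢ {a} := by
      ext ⟨b, c⟩
      simp only [hS, Finset.mem_filter, Finset.mem_univ, true_and, Finset.mem_product,
        Finset.mem_singleton, Finset.mem_Iio]
      constructor <;> rintro ⟨h1, rfl⟩ <;> exact ⟨h1, rfl⟩
    rw [this, Finset.card_product, Finset.card_singleton, mul_one, Fin.card_Iio]
  -- inner sum is constant
  have hinner : ∀ p ∈ S, ∑ q ∈ S, w p q = (2 * (n : ℝ) + 5) / 9 := by
    intro p hp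
    have hp' : p.1 < p.2 := (Finset.mem_filter.1 hp).2
    have step1 : ∀ q ∈ S, w p q = 8/9 * (if p = q then (1:ℝ) else 0)
        + 1/9 * ((if p.1 = q.1 then (1:ℝ) else 0) + (if p.1 = q.2 then 1 else 0)
          + ((if p.2 = q.1 then 1 else 0) + (if p.2 = q.2 then 1 else 0))
          - (if p = q then 1 else 0)) := by
      intro q hq
      have hq' : q.1 < q.2 := (Finset.mem_filter.1 hq).2
      rw [hw p q hp' hq']
      have hpv : (p.1 : ℕ) < (p.2 : ℕ) := hp'
      have hqv : (q.1 : ℕ) < (q.2 : ℕ) := hq'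
      by_cases hpq : p = q
      · subst hpq
        have h12 : p.1 ≠ p.2 := ne_of_lt hp'
        have h21 : p.2 ≠ p.1 := (ne_of_lt hp').symm
        simp [h12, h21]
        norm_num
      · rw [if_neg hpq]
        have hne : p.1 = q.1 → p.2 ≠ q.2 := by
          intro h1 h2; exact hpq (Prod.ext h1 h2)
        by_cases h11 : p.1 = q.1
        · have e22 : p.2 ≠ q.2 := hne h11
          have e12 : p.1 ≠ q.2 := by
            intro h; apply absurd hqv; rw [← h11, ← h]; omega
          have e21 : p.2 ≠ q.1 := by
            intro h; apply absurd hpv; rw [h11, ← h]; omega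
          simp [hpq, h11, e12, e21, e22, hp'.ne, hp'.ne', hq'.ne, hq'.ne']
        · by_cases h12 : p.1 = q.2
          · have e21 : p.2 ≠ q.1 := by
              intro h
              have v12 : (p.1 : ℕ) = (q.2 : ℕ) := congrArg Fin.val h12
              have v21 : (p.2 : ℕ) = (q.1 : ℕ) := congrArg Fin.val h
              omega
            have e22 : p.2 ≠ q.2 := by
              intro h
              have v12 : (p.1 : ℕ) = (q.2 : ℕ) := congrArg Fin.val h12
              have v22 : (p.2 : ℕ) = (q.2 : ℕ) := congrArg Fin.val h
              omega
            simp [hpq, h11, h12, e21, e22, hp'.ne, hp'.ne', hq'.ne, hq'.ne']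
          · by_cases h21 : p.2 = q.1
            · have e22 : p.2 ≠ q.2 := by
                intro h
                have v21 : (p.2 : ℕ) = (q.1 : ℕ) := congrArg Fin.val h21
                have v22 : (p.2 : ℕ) = (q.2 : ℕ) := congrArg Fin.val h
                omega
              simp [hpq, h11, h12, h21, e22, hp'.ne, hp'.ne', hq'.ne, hq'.ne']
            · by_cases h22 : p.2 = q.2
              · simp [hpq, h11, h12, h21, h22, hp'.ne, hp'.ne', hq'.ne, hq'.ne']
              · simp [hpq, h11, h12, h21, h22]
    rw [Finset.sum_congr rfl step1]
    rw [Finset.sum_add_distrib, ← Finset.mul_sum, ← Finset.mul_sum,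
      Finset.sum_sub_distrib, Finset.sum_add_distrib, Finset.sum_add_distrib,
      Finset.sum_add_distrib]
    have hd : ∑ q ∈ S, (if p = q then (1:ℝ) else 0) = 1 := by
      rw [Finset.sum_ite_eq S p (fun _ => (1:ℝ))]
      exact if_pos hp
    rw [hd, hc1 p.1, hc2 p.1, hc1 p.2, hc2 p.2]
    have hb1 : (p.1 : ℕ) ≤ n - 1 := by omega
    have hb2 : (p.2 : ℕ) ≤ n - 1 := by omega
    have hn1 : 1 ≤ n := by omega
    push_cast [Nat.cast_sub, hb1, hb2, hn1]
    ring
  rw [Finset.sum_congr rfl hinner, Finset.sum_const, nsmul_eq_mul, hcardS]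
  ring

/-- Kendall's tau of the samples `X₁,…,Xₙ` and `Y₁,…,Yₙ`. -/
noncomputable def kendallTau (n : ℕ) (X Y : Fin n → ℝ) : ℝ :=
  (2 / (n * (n - 1))) *
    ∑ p ∈ Finset.univ.filter (fun p : Fin n × Fin n => p.1 < p.2),
      Real.sign (X p.1 - X p.2) * Real.sign (Y p.1 - Y p.2)

/-- If `X₁,…,Xₙ` and `Y₁,…,Yₙ` are iid real random variables with continuous common
distributions (all mutually independent), then Kendall's tau `τ` satisfies `E[τ] = 0`
and `Var(τ) = 2(2n+5)/(9n(n-1))`. -/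
theorem kendallTau_mean_variance
    {Ω : Type*} [MeasurableSpace Ω] (P : Measure Ω) [IsProbabilityMeasure P]
    (n : ℕ) (hn : 2 ≤ n) (X Y : Fin n → Ω → ℝ)
    (hXmeas : ∀ i, Measurable (X i)) (hYmeas : ∀ i, Measurable (Y i))
    (hindep : iIndepFun
      (fun j => Sum.elim X Y j) P)
    (hXid : ∀ i j, Measure.map (X i) P = Measure.map (X j) P)
    (hYid : ∀ i j, Measure.map (Y i) P = Measure.map (Y j) P)
    (hXcont : ∀ i, ∀ x : ℝ, Measure.map (X i) P {x} = 0)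
    (hYcont : ∀ i, ∀ y : ℝ, Measure.map (Y i) P {y} = 0) :
    (∫ ω, kendallTau n (fun i => X i ω) (fun i => Y i ω) ∂P) = 0 ∧
    variance (fun ω => kendallTau n (fun i => X i ω) (fun i => Y i ω)) P =
      (2 * (2 * n + 5)) / (9 * n * (n - 1)) := by
  classical
  have hn0 : (0 : ℕ) < n := by omega
  set i0 : Fin n := ⟨0, hn0⟩ with hi0
  set μX := Measure.map (X i0) P with hμXdef
  set μY := Measure.map (Y i0) P with hμYdef
  haveI hPμX : IsProbabilityMeasure μX := Measure.isProbabilityMeasure_map (hXmeas i0).aemeasurable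
  haveI hPμY : IsProbabilityMeasure μY := Measure.isProbabilityMeasure_map (hYmeas i0).aemeasurable
  have hmX : ∀ i, Measure.map (X i) P = μX := fun i => hXid i i0
  have hmY : ∀ i, Measure.map (Y i) P = μY := fun i => hYid i i0
  have hcX : ∀ x, μX {x} = 0 := hXcont i0
  have hcY : ∀ y, μY {y} = 0 := hYcont i0
  have hmeasSum : ∀ j : Fin n ⊕ Fin n, Measurable (Sum.elim X Y j) := by
    rintro (i | i)
    · exact hXmeas i
    · exact hYmeas i
  set S := Finset.univ.filter (fun p : Fin n × Fin n => p.1 < p.2) with hSdef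
  -- measurability of the summands
  have hsgn2 : Measurable fun r : ℝ × ℝ => Real.sign (r.1 - r.2) :=
    measurable_realSign.comp (measurable_fst.sub measurable_snd)
  have hUmeas : ∀ p : Fin n × Fin n, Measurable fun ω => Real.sign (X p.1 ω - X p.2 ω) :=
    fun p => measurable_realSign.comp ((hXmeas p.1).sub (hXmeas p.2))
  have hVmeas : ∀ p : Fin n × Fin n, Measurable fun ω => Real.sign (Y p.1 ω - Y p.2 ω) :=
    fun p => measurable_realSign.comp ((hYmeas p.1).sub (hYmeas p.2))
  have hGmeas : ∀ p : Fin n × Fin n, Measurable fun ω =>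
      Real.sign (X p.1 ω - X p.2 ω) * Real.sign (Y p.1 ω - Y p.2 ω) :=
    fun p => (hUmeas p).mul (hVmeas p)
  have habs1 : ∀ a b : ℝ, |Real.sign a * Real.sign b| ≤ 1 := by
    intro a b
    rw [abs_mul]
    exact mul_le_one₀ (abs_realSign_le a) (abs_nonneg _) (abs_realSign_le b)
  have hGint : ∀ p : Fin n × Fin n, Integrable (fun ω =>
      Real.sign (X p.1 ω - X p.2 ω) * Real.sign (Y p.1 ω - Y p.2 ω)) P :=
    fun p => integrable_of_bdd (hGmeas p).aestronglyMeasurable (fun ω => habs1 _ _)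
  have hUUint : ∀ p q : Fin n × Fin n, Integrable (fun ω =>
      Real.sign (X p.1 ω - X p.2 ω) * Real.sign (X q.1 ω - X q.2 ω)) P :=
    fun p q => integrable_of_bdd ((hUmeas p).mul (hUmeas q)).aestronglyMeasurable
      (fun ω => habs1 _ _)
  have hVVint : ∀ p q : Fin n × Fin n, Integrable (fun ω =>
      Real.sign (Y p.1 ω - Y p.2 ω) * Real.sign (Y q.1 ω - Y q.2 ω)) P :=
    fun p q => integrable_of_bdd ((hVmeas p).mul (hVmeas q)).aestronglyMeasurable
      (fun ω => habs1 _ _)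
  have hUint : ∀ p : Fin n × Fin n, Integrable (fun ω =>
      Real.sign (X p.1 ω - X p.2 ω)) P :=
    fun p => integrable_of_bdd (hUmeas p).aestronglyMeasurable (fun ω => abs_realSign_le _)
  have hVint : ∀ p : Fin n × Fin n, Integrable (fun ω =>
      Real.sign (Y p.1 ω - Y p.2 ω)) P :=
    fun p => integrable_of_bdd (hVmeas p).aestronglyMeasurable (fun ω => abs_realSign_le _)
  -- pair laws
  have hpairX : ∀ s t : Fin n, s ≠ t →
      Measure.map (fun ω => (X s ω, X t ω)) P = μX.prod μX := by
    intro s t hst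
    have hI : IndepFun (X s) (X t) P :=
      hindep.indepFun (show (Sum.inl s : Fin n ⊕ Fin n) ≠ Sum.inl t by simpa using hst)
    rw [(indepFun_iff_map_prod_eq_prod_map_map (hXmeas s).aemeasurable
      (hXmeas t).aemeasurable).1 hI, hmX s, hmX t]
  have hpairY : ∀ s t : Fin n, s ≠ t →
      Measure.map (fun ω => (Y s ω, Y t ω)) P = μY.prod μY := by
    intro s t hst
    have hI : IndepFun (Y s) (Y t) P :=
      hindep.indepFun (show (Sum.inr s : Fin n ⊕ Fin n) ≠ Sum.inr t by simpa using hst)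
    rw [(indepFun_iff_map_prod_eq_prod_map_map (hYmeas s).aemeasurable
      (hYmeas t).aemeasurable).1 hI, hmY s, hmY t]
  -- expectation of a single sign is zero
  have hZX : ∀ s t : Fin n, s ≠ t → ∫ ω, Real.sign (X s ω - X t ω) ∂P = 0 := by
    intro s t hst
    have hpm : Measurable fun ω => (X s ω, X t ω) := (hXmeas s).prodMk (hXmeas t)
    calc ∫ ω, Real.sign (X s ω - X t ω) ∂P
        = ∫ r, Real.sign (r.1 - r.2) ∂(Measure.map (fun ω => (X s ω, X t ω)) P) :=
          (integral_map hpm.aemeasurable hsgn2.aestronglyMeasurable).symm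
      _ = 0 := by rw [hpairX s t hst]; exact pair_sign_integral μX
  have hZY : ∀ s t : Fin n, s ≠ t → ∫ ω, Real.sign (Y s ω - Y t ω) ∂P = 0 := by
    intro s t hst
    have hpm : Measurable fun ω => (Y s ω, Y t ω) := (hYmeas s).prodMk (hYmeas t)
    calc ∫ ω, Real.sign (Y s ω - Y t ω) ∂P
        = ∫ r, Real.sign (r.1 - r.2) ∂(Measure.map (fun ω => (Y s ω, Y t ω)) P) :=
          (integral_map hpm.aemeasurable hsgn2.aestronglyMeasurable).symm
      _ = 0 := by rw [hpairY s t hst]; exact pair_sign_integral μY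
  -- no ties a.s.
  have hdiagms : MeasurableSet {r : ℝ × ℝ | r.1 = r.2} :=
    measurableSet_eq_fun measurable_fst measurable_snd
  have hXneq : ∀ s t : Fin n, s ≠ t → ∀ᵐ ω ∂P, X s ω ≠ X t ω := by
    intro s t hst
    have hpm : Measurable fun ω => (X s ω, X t ω) := (hXmeas s).prodMk (hXmeas t)
    have h0 : P ((fun ω => (X s ω, X t ω)) ⁻¹' {r : ℝ × ℝ | r.1 = r.2}) = 0 := by
      rw [← Measure.map_apply hpm hdiagms, hpairX s t hst]
      exact prod_diag_null μX μX hcX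
    filter_upwards [measure_eq_zero_iff_ae_notMem.1 h0] with ω h
    simpa using h
  have hYneq : ∀ s t : Fin n, s ≠ t → ∀ᵐ ω ∂P, Y s ω ≠ Y t ω := by
    intro s t hst
    have hpm : Measurable fun ω => (Y s ω, Y t ω) := (hYmeas s).prodMk (hYmeas t)
    have h0 : P ((fun ω => (Y s ω, Y t ω)) ⁻¹' {r : ℝ × ℝ | r.1 = r.2}) = 0 := by
      rw [← Measure.map_apply hpm hdiagms, hpairY s t hst]
      exact prod_diag_null μY μY hcY
    filter_upwards [measure_eq_zero_iff_ae_notMem.1 h0] with ω h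
    simpa using h
  -- triple law and the 1/3 integral
  have hKX : ∀ a b c : Fin n, a ≠ b → a ≠ c → b ≠ c →
      ∫ ω, Real.sign (X a ω - X b ω) * Real.sign (X a ω - X c ω) ∂P = 1/3 := by
    intro a b c hab hac hbc
    have hpairbc : Measurable fun ω => (X b ω, X c ω) := (hXmeas b).prodMk (hXmeas c)
    have htm : Measurable fun ω => (X a ω, (X b ω, X c ω)) := (hXmeas a).prodMk hpairbc
    have hI : IndepFun (X a) (fun ω => (X b ω, X c ω)) P :=
      (hindep.indepFun_prodMk hmeasSum (Sum.inl b) (Sum.inl c) (Sum.inl a)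
        (by simpa using hab.symm) (by simpa using hac.symm)).symm
    have hlaw : Measure.map (fun ω => (X a ω, (X b ω, X c ω))) P = μX.prod (μX.prod μX) := by
      rw [(indepFun_iff_map_prod_eq_prod_map_map (hXmeas a).aemeasurable
        hpairbc.aemeasurable).1 hI, hmX a, hpairX b c hbc]
    have hgm : Measurable fun r : ℝ × ℝ × ℝ => Real.sign (r.1 - r.2.1) * Real.sign (r.1 - r.2.2) :=
      ((measurable_realSign.comp (measurable_fst.sub (measurable_fst.comp measurable_snd)))).mul
        ((measurable_realSign.comp (measurable_fst.sub (measurable_snd.comp measurable_snd))))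
    calc ∫ ω, Real.sign (X a ω - X b ω) * Real.sign (X a ω - X c ω) ∂P
        = ∫ r, Real.sign (r.1 - r.2.1) * Real.sign (r.1 - r.2.2)
            ∂(Measure.map (fun ω => (X a ω, (X b ω, X c ω))) P) :=
          (integral_map htm.aemeasurable hgm.aestronglyMeasurable).symm
      _ = 1/3 := by rw [hlaw]; exact triple_sign_integral μX hcX
  have hKY : ∀ a b c : Fin n, a ≠ b → a ≠ c → b ≠ c →
      ∫ ω, Real.sign (Y a ω - Y b ω) * Real.sign (Y a ω - Y c ω) ∂P = 1/3 := by
    intro a b c hab hac hbc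
    have hpairbc : Measurable fun ω => (Y b ω, Y c ω) := (hYmeas b).prodMk (hYmeas c)
    have htm : Measurable fun ω => (Y a ω, (Y b ω, Y c ω)) := (hYmeas a).prodMk hpairbc
    have hI : IndepFun (Y a) (fun ω => (Y b ω, Y c ω)) P :=
      (hindep.indepFun_prodMk hmeasSum (Sum.inr b) (Sum.inr c) (Sum.inr a)
        (by simpa using hab.symm) (by simpa using hac.symm)).symm
    have hlaw : Measure.map (fun ω => (Y a ω, (Y b ω, Y c ω))) P = μY.prod (μY.prod μY) := by
      rw [(indepFun_iff_map_prod_eq_prod_map_map (hYmeas a).aemeasurable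
        hpairbc.aemeasurable).1 hI, hmY a, hpairY b c hbc]
    have hgm : Measurable fun r : ℝ × ℝ × ℝ => Real.sign (r.1 - r.2.1) * Real.sign (r.1 - r.2.2) :=
      ((measurable_realSign.comp (measurable_fst.sub (measurable_fst.comp measurable_snd)))).mul
        ((measurable_realSign.comp (measurable_fst.sub (measurable_snd.comp measurable_snd))))
    calc ∫ ω, Real.sign (Y a ω - Y b ω) * Real.sign (Y a ω - Y c ω) ∂P
        = ∫ r, Real.sign (r.1 - r.2.1) * Real.sign (r.1 - r.2.2)
            ∂(Measure.map (fun ω => (Y a ω, (Y b ω, Y c ω))) P) :=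
          (integral_map htm.aemeasurable hgm.aestronglyMeasurable).symm
      _ = 1/3 := by rw [hlaw]; exact triple_sign_integral μY hcY
  -- X-block vs Y-block independence
  have hindepXY : ∀ (φ ψ : (Fin n → ℝ) → ℝ), Measurable φ → Measurable ψ →
      IndepFun (fun ω => φ (fun i => X i ω)) (fun ω => ψ (fun i => Y i ω)) P := by
    intro φ ψ hφ hψ
    set Sl : Finset (Fin n ⊕ Fin n) := Finset.univ.map ⟨Sum.inl, Sum.inl_injective⟩ with hSl
    set Sr : Finset (Fin n ⊕ Fin n) := Finset.univ.map ⟨Sum.inr, Sum.inr_injective⟩ with hSr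
    have hd : Disjoint Sl Sr := by
      rw [Finset.disjoint_left]
      rintro (i | i) hi hj
      · simp [hSr] at hj
      · simp [hSl] at hi
    have base := hindep.indepFun_finset Sl Sr hd hmeasSum
    have hΦ : Measurable fun v : ({x // x ∈ Sl} → ℝ) =>
        φ (fun i => v ⟨Sum.inl i, by simp [hSl]⟩) :=
      hφ.comp (measurable_pi_lambda _ fun i => measurable_pi_apply _)
    have hΨ : Measurable fun v : ({x // x ∈ Sr} → ℝ) =>
        ψ (fun i => v ⟨Sum.inr i, by simp [hSr]⟩) :=
      hψ.comp (measurable_pi_lambda _ fun i => measurable_pi_apply _)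
    exact base.comp hΦ hΨ
  -- factorization of the expectation of products
  have hfac : ∀ p q : Fin n × Fin n,
      ∫ ω, (Real.sign (X p.1 ω - X p.2 ω) * Real.sign (Y p.1 ω - Y p.2 ω)) *
        (Real.sign (X q.1 ω - X q.2 ω) * Real.sign (Y q.1 ω - Y q.2 ω)) ∂P =
      (∫ ω, Real.sign (X p.1 ω - X p.2 ω) * Real.sign (X q.1 ω - X q.2 ω) ∂P) *
      (∫ ω, Real.sign (Y p.1 ω - Y p.2 ω) * Real.sign (Y q.1 ω - Y q.2 ω) ∂P) := by
    intro p q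
    have hφ : Measurable fun v : Fin n → ℝ =>
        Real.sign (v p.1 - v p.2) * Real.sign (v q.1 - v q.2) :=
      (measurable_realSign.comp ((measurable_pi_apply p.1).sub (measurable_pi_apply p.2))).mul
        (measurable_realSign.comp ((measurable_pi_apply q.1).sub (measurable_pi_apply q.2)))
    have hI : IndepFun
        (fun ω => Real.sign (X p.1 ω - X p.2 ω) * Real.sign (X q.1 ω - X q.2 ω))
        (fun ω => Real.sign (Y p.1 ω - Y p.2 ω) * Real.sign (Y q.1 ω - Y q.2 ω)) P :=
      hindepXY _ _ hφ hφ
    have := hI.integral_fun_mul_eq_mul_integral (hUUint p q).aestronglyMeasurable (hVVint p q).aestronglyMeasurable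
    calc ∫ ω, (Real.sign (X p.1 ω - X p.2 ω) * Real.sign (Y p.1 ω - Y p.2 ω)) *
          (Real.sign (X q.1 ω - X q.2 ω) * Real.sign (Y q.1 ω - Y q.2 ω)) ∂P
        = ∫ ω, (Real.sign (X p.1 ω - X p.2 ω) * Real.sign (X q.1 ω - X q.2 ω)) *
          (Real.sign (Y p.1 ω - Y p.2 ω) * Real.sign (Y q.1 ω - Y q.2 ω)) ∂P := by
          congr 1; funext ω; ring
      _ = _ := this
  -- factorization of the expectation of a single summand
  have hfac1 : ∀ p : Fin n × Fin n,
      ∫ ω, Real.sign (X p.1 ω - X p.2 ω) * Real.sign (Y p.1 ω - Y p.2 ω) ∂P =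
      (∫ ω, Real.sign (X p.1 ω - X p.2 ω) ∂P) * (∫ ω, Real.sign (Y p.1 ω - Y p.2 ω) ∂P) := by
    intro p
    have hφ : Measurable fun v : Fin n → ℝ => Real.sign (v p.1 - v p.2) :=
      measurable_realSign.comp ((measurable_pi_apply p.1).sub (measurable_pi_apply p.2))
    exact (hindepXY _ _ hφ hφ).integral_fun_mul_eq_mul_integral (hUint p).aestronglyMeasurable (hVint p).aestronglyMeasurable
  -- squared signs integrate to one
  have hUUone : ∀ p : Fin n × Fin n, p.1 ≠ p.2 →
      ∫ ω, Real.sign (X p.1 ω - X p.2 ω) * Real.sign (X p.1 ω - X p.2 ω) ∂P = 1 := by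
    intro p hp
    have hae : ∀ᵐ ω ∂P,
        Real.sign (X p.1 ω - X p.2 ω) * Real.sign (X p.1 ω - X p.2 ω) = 1 := by
      filter_upwards [hXneq p.1 p.2 hp] with ω h
      rcases Real.sign_apply_eq_of_ne_zero _ (sub_ne_zero.2 h) with h' | h' <;>
        rw [h'] <;> norm_num
    rw [integral_congr_ae hae]
    simp
  have hVVone : ∀ p : Fin n × Fin n, p.1 ≠ p.2 →
      ∫ ω, Real.sign (Y p.1 ω - Y p.2 ω) * Real.sign (Y p.1 ω - Y p.2 ω) ∂P = 1 := by
    intro p hp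
    have hae : ∀ᵐ ω ∂P,
        Real.sign (Y p.1 ω - Y p.2 ω) * Real.sign (Y p.1 ω - Y p.2 ω) = 1 := by
      filter_upwards [hYneq p.1 p.2 hp] with ω h
      rcases Real.sign_apply_eq_of_ne_zero _ (sub_ne_zero.2 h) with h' | h' <;>
        rw [h'] <;> norm_num
    rw [integral_congr_ae hae]
    simp
  -- shared-index case, uniform over the family W
  have hK4 : ∀ (W : Fin n → Ω → ℝ),
      (∀ a b c : Fin n, a ≠ b → a ≠ c → b ≠ c →
        ∫ ω, Real.sign (W a ω - W b ω) * Real.sign (W a ω - W c ω) ∂P = 1/3) →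
      ∀ p q : Fin n × Fin n, p.1 < p.2 → q.1 < q.2 → p ≠ q →
      (p.1 = q.1 ∨ p.1 = q.2 ∨ p.2 = q.1 ∨ p.2 = q.2) →
      ∫ ω, Real.sign (W p.1 ω - W p.2 ω) * Real.sign (W q.1 ω - W q.2 ω) ∂P =
        (if p.1 = q.1 ∨ p.2 = q.2 then (1:ℝ)/3 else -(1/3)) := by
    intro W hKW p q hp hq hpq hsh
    have hpv : (p.1 : ℕ) < (p.2 : ℕ) := hp
    have hqv : (q.1 : ℕ) < (q.2 : ℕ) := hq
    by_cases h11 : p.1 = q.1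
    · rw [if_pos (Or.inl h11)]
      have hbc : p.2 ≠ q.2 := fun h => hpq (Prod.ext h11 h)
      have hac : p.1 ≠ q.2 := by rw [h11]; exact hq.ne
      have heq : (fun ω => Real.sign (W p.1 ω - W p.2 ω) * Real.sign (W q.1 ω - W q.2 ω))
          = fun ω => Real.sign (W p.1 ω - W p.2 ω) * Real.sign (W p.1 ω - W q.2 ω) := by
        rw [h11]
      rw [show (∫ ω, Real.sign (W p.1 ω - W p.2 ω) * Real.sign (W q.1 ω - W q.2 ω) ∂P)
          = ∫ ω, Real.sign (W p.1 ω - W p.2 ω) * Real.sign (W p.1 ω - W q.2 ω) ∂P from by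
        rw [heq]]
      exact hKW p.1 p.2 q.2 hp.ne hac hbc
    · by_cases h22 : p.2 = q.2
      · rw [if_pos (Or.inr h22)]
        have hbc : p.1 ≠ q.1 := h11
        have hac : p.2 ≠ q.1 := by rw [h22]; exact hq.ne'
        have heq : (fun ω => Real.sign (W p.1 ω - W p.2 ω) * Real.sign (W q.1 ω - W q.2 ω))
            = fun ω => Real.sign (W p.2 ω - W p.1 ω) * Real.sign (W p.2 ω - W q.1 ω) := by
          funext ω
          rw [show W p.1 ω - W p.2 ω = -(W p.2 ω - W p.1 ω) by ring, Real.sign_neg,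
            show W q.1 ω - W q.2 ω = -(W p.2 ω - W q.1 ω) by rw [h22]; ring, Real.sign_neg]
          ring
        rw [show (∫ ω, Real.sign (W p.1 ω - W p.2 ω) * Real.sign (W q.1 ω - W q.2 ω) ∂P)
            = ∫ ω, Real.sign (W p.2 ω - W p.1 ω) * Real.sign (W p.2 ω - W q.1 ω) ∂P from by
          rw [heq]]
        exact hKW p.2 p.1 q.1 hp.ne' hac hbc
      · by_cases h12 : p.1 = q.2
        · rw [if_neg (by tauto)]
          have h12v : (p.1 : ℕ) = (q.2 : ℕ) := congrArg Fin.val h12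
          have hac : p.1 ≠ q.1 := h11
          have hbc : p.2 ≠ q.1 := by
            intro h; have := congrArg Fin.val h; omega
          have heq : (fun ω => Real.sign (W p.1 ω - W p.2 ω) * Real.sign (W q.1 ω - W q.2 ω))
              = fun ω => -(Real.sign (W p.1 ω - W p.2 ω) * Real.sign (W p.1 ω - W q.1 ω)) := by
            funext ω
            rw [show W q.1 ω - W q.2 ω = -(W p.1 ω - W q.1 ω) by rw [h12]; ring, Real.sign_neg]
            ring
          rw [show (∫ ω, Real.sign (W p.1 ω - W p.2 ω) * Real.sign (W q.1 ω - W q.2 ω) ∂P)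
              = ∫ ω, -(Real.sign (W p.1 ω - W p.2 ω) * Real.sign (W p.1 ω - W q.1 ω)) ∂P from by
            rw [heq]]
          rw [integral_neg, hKW p.1 p.2 q.1 hp.ne hac hbc]
        · have h21 : p.2 = q.1 := by tauto
          rw [if_neg (by tauto)]
          have h21v : (p.2 : ℕ) = (q.1 : ℕ) := congrArg Fin.val h21
          have hab : p.2 ≠ p.1 := hp.ne'
          have hac : p.2 ≠ q.2 := by
            intro h; have := congrArg Fin.val h; omega
          have hbc : p.1 ≠ q.2 := by
            intro h; have := congrArg Fin.val h; omega
          have heq : (fun ω => Real.sign (W p.1 ω - W p.2 ω) * Real.sign (W q.1 ω - W q.2 ω))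
              = fun ω => -(Real.sign (W p.2 ω - W p.1 ω) * Real.sign (W p.2 ω - W q.2 ω)) := by
            funext ω
            rw [show W p.1 ω - W p.2 ω = -(W p.2 ω - W p.1 ω) by ring, Real.sign_neg,
              show W q.1 ω - W q.2 ω = W p.2 ω - W q.2 ω by rw [h21]]
            ring
          rw [show (∫ ω, Real.sign (W p.1 ω - W p.2 ω) * Real.sign (W q.1 ω - W q.2 ω) ∂P)
              = ∫ ω, -(Real.sign (W p.2 ω - W p.1 ω) * Real.sign (W p.2 ω - W q.2 ω)) ∂P from by
            rw [heq]]
          rw [integral_neg, hKW p.2 p.1 q.2 hab hac hbc]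
  -- expectation of products of summands
  have hEgg : ∀ p q : Fin n × Fin n, p.1 < p.2 → q.1 < q.2 →
      (∫ ω, (Real.sign (X p.1 ω - X p.2 ω) * Real.sign (Y p.1 ω - Y p.2 ω)) *
        (Real.sign (X q.1 ω - X q.2 ω) * Real.sign (Y q.1 ω - Y q.2 ω)) ∂P) =
      (if p = q then (1:ℝ) else
        if p.1 = q.1 ∨ p.1 = q.2 ∨ p.2 = q.1 ∨ p.2 = q.2 then 1/9 else 0) := by
    intro p q hp hq
    rw [hfac p q]
    by_cases hpq : p = q
    · subst hpq
      rw [if_pos rfl, hUUone p hp.ne, hVVone p hp.ne]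
      norm_num
    · rw [if_neg hpq]
      by_cases hsh : p.1 = q.1 ∨ p.1 = q.2 ∨ p.2 = q.1 ∨ p.2 = q.2
      · rw [if_pos hsh, hK4 X hKX p q hp hq hpq hsh, hK4 Y hKY p q hp hq hpq hsh]
        by_cases hc : p.1 = q.1 ∨ p.2 = q.2
        · rw [if_pos hc]; norm_num
        · rw [if_neg hc]; norm_num
      · rw [if_neg hsh]
        push_neg at hsh
        have hIpq : IndepFun (fun ω => (X p.1 ω, X p.2 ω)) (fun ω => (X q.1 ω, X q.2 ω)) P :=
          hindep.indepFun_prodMk_prodMk hmeasSum (Sum.inl p.1) (Sum.inl p.2)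
            (Sum.inl q.1) (Sum.inl q.2) (by simpa using hsh.1) (by simpa using hsh.2.1)
            (by simpa using hsh.2.2.1) (by simpa using hsh.2.2.2)
        have hXzero : ∫ ω, Real.sign (X p.1 ω - X p.2 ω) * Real.sign (X q.1 ω - X q.2 ω) ∂P
            = 0 := by
          have h2 := (hIpq.comp hsgn2 hsgn2).integral_fun_mul_eq_mul_integral (hUint p).aestronglyMeasurable (hUint q).aestronglyMeasurable
          calc ∫ ω, Real.sign (X p.1 ω - X p.2 ω) * Real.sign (X q.1 ω - X q.2 ω) ∂P
              = (∫ ω, Real.sign (X p.1 ω - X p.2 ω) ∂P) *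
                (∫ ω, Real.sign (X q.1 ω - X q.2 ω) ∂P) := h2
            _ = 0 := by rw [hZX p.1 p.2 hp.ne, zero_mul]
        rw [hXzero, zero_mul]
  -- mean of a single summand is zero
  have hEg0 : ∀ p ∈ S, ∫ ω, Real.sign (X p.1 ω - X p.2 ω) * Real.sign (Y p.1 ω - Y p.2 ω) ∂P
      = 0 := by
    intro p hp
    rw [hfac1 p, hZX p.1 p.2 (Finset.mem_filter.1 hp).2.ne, zero_mul]
  -- the mean
  have hEt : ∫ ω, kendallTau n (fun i => X i ω) (fun i => Y i ω) ∂P = 0 := by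
    calc ∫ ω, kendallTau n (fun i => X i ω) (fun i => Y i ω) ∂P
        = ∫ ω, (2 / ((n : ℝ) * ((n : ℝ) - 1))) * ∑ p ∈ S,
            Real.sign (X p.1 ω - X p.2 ω) * Real.sign (Y p.1 ω - Y p.2 ω) ∂P := rfl
      _ = (2 / ((n : ℝ) * ((n : ℝ) - 1))) * ∑ p ∈ S,
            ∫ ω, Real.sign (X p.1 ω - X p.2 ω) * Real.sign (Y p.1 ω - Y p.2 ω) ∂P := by
          rw [integral_const_mul, integral_finset_sum S (fun p _ => hGint p)]
      _ = 0 := by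
          rw [Finset.sum_congr rfl hEg0, Finset.sum_const, smul_zero, mul_zero]
  refine ⟨hEt, ?_⟩
  -- measurability and boundedness of kendall's tau
  have hn2R : (2 : ℝ) ≤ (n : ℝ) := by exact_mod_cast hn
  have hcnn : (0 : ℝ) ≤ 2 / ((n : ℝ) * ((n : ℝ) - 1)) := by
    apply div_nonneg (by norm_num)
    nlinarith
  have htmeas : Measurable (fun ω => kendallTau n (fun i => X i ω) (fun i => Y i ω)) := by
    have h1 : Measurable (fun ω => ∑ p ∈ S,
        Real.sign (X p.1 ω - X p.2 ω) * Real.sign (Y p.1 ω - Y p.2 ω)) :=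
      Finset.measurable_sum S (fun p _ => hGmeas p)
    exact h1.const_mul _
  have hmem2 : MemLp (fun ω => kendallTau n (fun i => X i ω) (fun i => Y i ω)) 2 P := by
    refine MemLp.of_bound htmeas.aestronglyMeasurable
      ((2 / ((n : ℝ) * ((n : ℝ) - 1))) * S.card) ?_
    refine Filter.Eventually.of_forall fun ω => ?_
    rw [Real.norm_eq_abs]
    calc |kendallTau n (fun i => X i ω) (fun i => Y i ω)|
        = |2 / ((n : ℝ) * ((n : ℝ) - 1))| * |∑ p ∈ S,
            Real.sign (X p.1 ω - X p.2 ω) * Real.sign (Y p.1 ω - Y p.2 ω)| := abs_mul _ _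
      _ ≤ (2 / ((n : ℝ) * ((n : ℝ) - 1))) * S.card := by
          rw [abs_of_nonneg hcnn]
          refine mul_le_mul_of_nonneg_left ?_ hcnn
          refine le_trans (Finset.abs_sum_le_sum_abs _ _) ?_
          have := Finset.sum_le_card_nsmul S (fun p =>
            |Real.sign (X p.1 ω - X p.2 ω) * Real.sign (Y p.1 ω - Y p.2 ω)|) 1
            (fun p _ => habs1 _ _)
          simpa using this
  -- integrability of double products
  have habs2 : ∀ u v u' v' : ℝ,
      |Real.sign u * Real.sign v * (Real.sign u' * Real.sign v')| ≤ 1 := by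
    intro u v u' v'
    rw [abs_mul]
    exact mul_le_one₀ (habs1 _ _) (abs_nonneg _) (habs1 _ _)
  have hGGint : ∀ p q : Fin n × Fin n, Integrable (fun ω =>
      (Real.sign (X p.1 ω - X p.2 ω) * Real.sign (Y p.1 ω - Y p.2 ω)) *
      (Real.sign (X q.1 ω - X q.2 ω) * Real.sign (Y q.1 ω - Y q.2 ω))) P :=
    fun p q => integrable_of_bdd ((hGmeas p).mul (hGmeas q)).aestronglyMeasurable
      (fun ω => habs2 _ _ _ _)
  -- the second moment
  have hsq : (fun ω => kendallTau n (fun i => X i ω) (fun i => Y i ω)) ^ 2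
      = fun ω => (2 / ((n : ℝ) * ((n : ℝ) - 1)))^2 * ∑ p ∈ S, ∑ q ∈ S,
          (Real.sign (X p.1 ω - X p.2 ω) * Real.sign (Y p.1 ω - Y p.2 ω)) *
          (Real.sign (X q.1 ω - X q.2 ω) * Real.sign (Y q.1 ω - Y q.2 ω)) := by
    funext ω
    show (kendallTau n (fun i => X i ω) (fun i => Y i ω))^2 = _
    rw [show kendallTau n (fun i => X i ω) (fun i => Y i ω)
        = (2 / ((n : ℝ) * ((n : ℝ) - 1))) * ∑ p ∈ S,
          Real.sign (X p.1 ω - X p.2 ω) * Real.sign (Y p.1 ω - Y p.2 ω) from rfl]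
    rw [mul_pow, sq (∑ p ∈ S, Real.sign (X p.1 ω - X p.2 ω) * Real.sign (Y p.1 ω - Y p.2 ω)),
      Finset.sum_mul_sum]
  have hEgg' : ∀ p ∈ S, ∀ q ∈ S,
      (∫ ω, (Real.sign (X p.1 ω - X p.2 ω) * Real.sign (Y p.1 ω - Y p.2 ω)) *
        (Real.sign (X q.1 ω - X q.2 ω) * Real.sign (Y q.1 ω - Y q.2 ω)) ∂P) =
      (if p = q then (1:ℝ) else
        if p.1 = q.1 ∨ p.1 = q.2 ∨ p.2 = q.1 ∨ p.2 = q.2 then 1/9 else 0) :=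
    fun p hp q hq => hEgg p q (Finset.mem_filter.1 hp).2 (Finset.mem_filter.1 hq).2
  have hsecond : ∫ ω, ((fun ω => kendallTau n (fun i => X i ω) (fun i => Y i ω)) ^ 2) ω ∂P
      = (2 / ((n : ℝ) * ((n : ℝ) - 1)))^2 *
        ((n : ℝ) * ((n : ℝ) - 1) * (2 * (n : ℝ) + 5) / 18) := by
    rw [hsq]
    rw [integral_const_mul]
    rw [integral_finset_sum S (fun p _ => integrable_finset_sum S (fun q _ => hGGint p q))]
    have hswap : ∀ p ∈ S, (∫ ω, ∑ q ∈ S,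
        (Real.sign (X p.1 ω - X p.2 ω) * Real.sign (Y p.1 ω - Y p.2 ω)) *
        (Real.sign (X q.1 ω - X q.2 ω) * Real.sign (Y q.1 ω - Y q.2 ω)) ∂P)
        = ∑ q ∈ S, ∫ ω,
        (Real.sign (X p.1 ω - X p.2 ω) * Real.sign (Y p.1 ω - Y p.2 ω)) *
        (Real.sign (X q.1 ω - X q.2 ω) * Real.sign (Y q.1 ω - Y q.2 ω)) ∂P :=
      fun p _ => integral_finset_sum S (fun q _ => hGGint p q)
    rw [Finset.sum_congr rfl hswap, hSdef]
    exact congrArg (fun z => (2 / ((n : ℝ) * ((n : ℝ) - 1)))^2 * z)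
      (comb_sum n hn (fun p q => ∫ ω,
        (Real.sign (X p.1 ω - X p.2 ω) * Real.sign (Y p.1 ω - Y p.2 ω)) *
        (Real.sign (X q.1 ω - X q.2 ω) * Real.sign (Y q.1 ω - Y q.2 ω)) ∂P)
        (fun p q hp hq => hEgg p q hp hq))
  -- conclude
  have h1 : (∫ a, (fun ω => kendallTau n (fun i => X i ω) (fun i => Y i ω)) a ∂P) = 0 := hEt
  rw [variance_eq_sub hmem2, hsecond, h1]
  have hne1 : (n : ℝ) ≠ 0 := by linarith
  have hne2 : (n : ℝ) - 1 ≠ 0 := by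
    intro h; rw [sub_eq_zero] at h; linarith
  field_simp
  ring
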